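/- arXiv:2107.12475 — 2 statements merged into one kernel-verified Lean document; each statement's English description precedes it below -/
import Mathlib

section
/- Erdős' conjecture (for all n > 8, the base-3 representation of 2^n contains a digit 2) is equivalent to the statement: the only powers of two that are sums of distinct powers of 3 are 1, 4, and 256. -/
lemma sum_pow3_split (S : Finset ℕ) :
    ∑ a ∈ S, 3 ^ a =
      (if 0 ∈ S then 1 else 0) + 3 * ∑ a ∈ (S.erase 0).image (· - 1), 3 ^ a := by
  have hinj : ∀ x ∈ S.erase 0, ∀ y ∈ S.erase 0, x - 1 = y - 1 → x = y := by
    intro x hx y hy h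
    have hx0 := Finset.ne_of_mem_erase hx
    have hy0 := Finset.ne_of_mem_erase hy
    omega
  have himg : ∑ a ∈ (S.erase 0).image (· - 1), 3 ^ a = ∑ a ∈ S.erase 0, 3 ^ (a - 1) :=
    Finset.sum_image hinj
  have herase : 3 * ∑ a ∈ (S.erase 0).image (· - 1), 3 ^ a = ∑ a ∈ S.erase 0, 3 ^ a := by
    rw [himg, Finset.mul_sum]
    refine Finset.sum_congr rfl fun a ha => ?_
    have ha0 := Finset.ne_of_mem_erase ha
    rw [← pow_succ']
    congr 1
    omega
  by_cases h0 : 0 ∈ S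
  · rw [if_pos h0, herase]
    have := Finset.add_sum_erase S (fun a => 3 ^ a) h0
    simpa using this.symm
  · rw [if_neg h0, herase, Finset.erase_eq_self.mpr h0, zero_add]

lemma no_two_of_sum (m : ℕ) : ∀ S : Finset ℕ, m = ∑ a ∈ S, 3 ^ a → 2 ∉ Nat.digits 3 m := by
  induction m using Nat.strong_induction_on with
  | _ m ih =>
    intro S hS
    rcases Nat.eq_zero_or_pos m with h0 | hpos
    · subst h0; simp
    · rw [Nat.digits_def' (by norm_num : 1 < 3) hpos]
      have hkey := sum_pow3_split S
      rw [← hS] at hkey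
      set c := if 0 ∈ S then 1 else 0 with hc
      have hc1 : c ≤ 1 := by rw [hc]; split <;> omega
      have hmod : m % 3 = c := by omega
      have hdiv : m / 3 = ∑ a ∈ (S.erase 0).image (· - 1), 3 ^ a := by omega
      intro hmem
      rcases List.mem_cons.mp hmem with h | h
      · omega
      · exact ih (m / 3) (Nat.div_lt_self hpos (by norm_num)) _ hdiv h

lemma sum_of_no_two (m : ℕ) : 2 ∉ Nat.digits 3 m → ∃ S : Finset ℕ, m = ∑ a ∈ S, 3 ^ a := by
  induction m using Nat.strong_induction_on with
  | _ m ih =>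
    intro hno
    rcases Nat.eq_zero_or_pos m with h0 | hpos
    · exact ⟨∅, by simp [h0]⟩
    · rw [Nat.digits_def' (by norm_num : 1 < 3) hpos] at hno
      have hmod : m % 3 ≠ 2 := fun h => hno (by rw [← h]; exact List.mem_cons_self)
      have htail : 2 ∉ Nat.digits 3 (m / 3) := fun h => hno (List.mem_cons_of_mem _ h)
      obtain ⟨S, hS⟩ := ih (m / 3) (Nat.div_lt_self hpos (by norm_num)) htail
      have hsum : ∑ a ∈ S.image (· + 1), 3 ^ a = 3 * (m / 3) := by
        rw [Finset.sum_image (by intro x _ y _ h; simp only at h; omega), hS, Finset.mul_sum]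
        exact Finset.sum_congr rfl fun a _ => by rw [pow_succ']
      have h01 : m % 3 = 0 ∨ m % 3 = 1 := by omega
      rcases h01 with h | h
      · exact ⟨S.image (· + 1), by omega⟩
      · refine ⟨insert 0 (S.image (· + 1)), ?_⟩
        rw [Finset.sum_insert (by simp)]
        simp only [pow_zero]
        omega

theorem erdos_iff_only_powers :
    (∀ n : ℕ, 8 < n → 2 ∈ Nat.digits 3 (2 ^ n)) ↔
      (∀ n : ℕ, (∃ S : Finset ℕ, 2 ^ n = ∑ a ∈ S, 3 ^ a) → n = 0 ∨ n = 2 ∨ n = 8) := by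
  constructor
  · intro h n ⟨S, hS⟩
    have hno : 2 ∉ Nat.digits 3 (2 ^ n) := no_two_of_sum _ S hS
    have hle : n ≤ 8 := by
      by_contra hlt
      exact hno (h n (by omega))
    interval_cases n
    · exact Or.inl rfl
    · exact absurd (show 2 ∈ Nat.digits 3 (2 ^ 1) by norm_num) hno
    · exact Or.inr (Or.inl rfl)
    · exact absurd (show 2 ∈ Nat.digits 3 (2 ^ 3) by norm_num) hno
    · exact absurd (show 2 ∈ Nat.digits 3 (2 ^ 4) by norm_num) hno
    · exact absurd (show 2 ∈ Nat.digits 3 (2 ^ 5) by norm_num) hno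
    · exact absurd (show 2 ∈ Nat.digits 3 (2 ^ 6) by norm_num) hno
    · exact absurd (show 2 ∈ Nat.digits 3 (2 ^ 7) by norm_num) hno
    · exact Or.inr (Or.inr rfl)
  · intro h n hn
    by_contra hno
    obtain ⟨S, hS⟩ := sum_of_no_two _ hno
    rcases h n ⟨S, hS⟩ with h | h | h <;> omega
end

section
/- For any natural number base b ≥ 2 and any a, c ∈ ℕ, there exists a finite-state transducer (a finite state set with an output function and transition function on digits 0..b-1) computing x ↦ a·x + c on little-endian base-b representations, in the sense that running the transducer on the digits of x (padded with sufficiently many trailing zeros) outputs the digits of a·x + c. -/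
/-- A finite state transducer over the alphabet `Fin b`. -/
structure FST (b : ℕ) where
  Q : Type
  fin : Fintype Q
  q₀ : Q
  δ : Q → Fin b → Q
  out : Q → Fin b → Fin b

/-- Run an FST from a given state on a digit list, producing an output list
of the same length. -/
def FST.run {b : ℕ} (T : FST b) : T.Q → List (Fin b) → List (Fin b)
  | _, [] => []
  | q, d :: w => T.out q d :: T.run (T.δ q d) w

section Aux

variable (b a c : ℕ)

lemma affT_bound (hb : 2 ≤ b) (q : Fin (a + c + 1)) (d : Fin b) :
    (a * d.val + q.val) / b < a + c + 1 := by
  have hd : d.val + 1 ≤ b := d.isLt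
  have hq : q.val ≤ a + c := by omega
  have h1 : a * d.val + a ≤ a * b := by
    have := Nat.mul_le_mul_left a hd
    rwa [Nat.mul_add, Nat.mul_one] at this
  have h2 : a * d.val + q.val ≤ a * b + c := by omega
  have h3 : (a * b + c) / b ≤ a + c := by
    have h4 : a * b + c ≤ (a + c) * b := by
      rw [Nat.add_mul]
      have := Nat.le_mul_of_pos_right c (show 0 < b by omega)
      omega
    calc (a * b + c) / b ≤ ((a + c) * b) / b := Nat.div_le_div_right h4
    _ = a + c := Nat.mul_div_cancel _ (by omega)
  have := Nat.div_le_div_right (c := b) h2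
  omega

def affT (hb : 2 ≤ b) : FST b where
  Q := Fin (a + c + 1)
  fin := inferInstance
  q₀ := ⟨c, by omega⟩
  δ := fun q d => ⟨(a * d.val + q.val) / b, affT_bound b a c hb q d⟩
  out := fun q d => ⟨(a * d.val + q.val) % b, Nat.mod_lt _ (Nat.lt_of_lt_of_le (by decide) hb)⟩

lemma affT_run_spec (hb : 2 ≤ b) (w : List (Fin b)) :
    ∀ q : Fin (a + c + 1),
      Nat.ofDigits b (((affT b a c hb).run q w).map Fin.val)
        + b ^ w.length * (w.foldl (affT b a c hb).δ q).val
      = a * Nat.ofDigits b (w.map Fin.val) + q.val := by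
  induction w with
  | nil => intro q; simp [FST.run, Nat.ofDigits]; rfl
  | cons d w ih =>
    intro q
    have hdiv : (a * d.val + q.val) % b + b * ((a * d.val + q.val) / b)
        = a * d.val + q.val := Nat.mod_add_div _ _
    have := ih ((affT b a c hb).δ q d)
    simp only [FST.run, List.map_cons, Nat.ofDigits_cons, List.length_cons,
      List.foldl_cons] at *
    have hδ : (((affT b a c hb).δ q d) : Fin (a+c+1)).val = (a * d.val + q.val) / b := rfl
    have hout : (((affT b a c hb).out q d) : Fin b).val = (a * d.val + q.val) % b := rfl
    rw [show List.foldl (affT b a c hb).δ q (d :: w) = List.foldl (affT b a c hb).δ ((affT b a c hb).δ q d) w from rfl]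
    rw [hout]
    ring_nf
    rw [hδ] at this
    ring_nf at this
    nlinarith [this, hdiv, pow_succ b w.length]

lemma affT_zeros (hb : 2 ≤ b) (l : List (Fin b)) (hl : ∀ d ∈ l, (d : Fin b).val = 0) :
    ∀ q : Fin (a + c + 1),
      (l.foldl (affT b a c hb).δ q).val = q.val / b ^ l.length := by
  induction l with
  | nil => intro q; simp; rfl
  | cons d l ih =>
    intro q
    have hd : d.val = 0 := hl d List.mem_cons_self
    rw [show List.foldl (affT b a c hb).δ q (d :: l) = List.foldl (affT b a c hb).δ ((affT b a c hb).δ q d) l from rfl, ih (fun e he => hl e (List.mem_cons_of_mem d he)) ((affT b a c hb).δ q d)]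
    have hδ : (((affT b a c hb).δ q d) : Fin (a+c+1)).val = q.val / b := by
      simp [affT, hd]
    rw [hδ, Nat.div_div_eq_div_mul, List.length_cons, ← pow_succ']

lemma ofDigits_replicate_zero (k : ℕ) : Nat.ofDigits b (List.replicate k (0 : ℕ)) = 0 := by
  induction k with
  | zero => simp
  | succ k ih => simp [List.replicate_succ, Nat.ofDigits_cons, ih]

end Aux

theorem affine_map_has_fst (b a c : ℕ) (hb : 2 ≤ b) :
    ∃ T : FST b, ∀ x : ℕ, ∃ N : ℕ, ∀ k : ℕ, N ≤ k →
      Nat.ofDigits b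
        ((T.run T.q₀
          (((Nat.digits b x).map (fun d => (⟨d % b, Nat.mod_lt d (by omega)⟩ : Fin b)))
            ++ List.replicate k (⟨0, by omega⟩ : Fin b))).map Fin.val)
        = a * x + c := by
  refine ⟨affT b a c hb, fun x => ⟨a + c + 1, fun k hk => ?_⟩⟩
  have main : ∀ (w1 w2 : List (Fin b)), w1.map Fin.val = Nat.digits b x →
      (∀ d ∈ w2, (d : Fin b).val = 0) → a + c + 1 ≤ b ^ w2.length →
      Nat.ofDigits b
        (((affT b a c hb).run (affT b a c hb).q₀ (w1 ++ w2)).map Fin.val)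
        = a * x + c := by
    intro w1 w2 h1 h2 h3
    have spec := affT_run_spec b a c hb (w1 ++ w2) (affT b a c hb).q₀
    have hof : Nat.ofDigits b ((w1 ++ w2).map Fin.val) = x := by
      rw [List.map_append, Nat.ofDigits_append, h1, Nat.ofDigits_digits]
      have : w2.map Fin.val = List.replicate (w2.map Fin.val).length 0 := by
        apply List.eq_replicate_of_mem
        intro d hd
        obtain ⟨e, he, rfl⟩ := List.mem_map.mp hd
        exact h2 e he
      rw [this, ofDigits_replicate_zero]
      simp
    have hfold : ((w1 ++ w2).foldl (affT b a c hb).δ (affT b a c hb).q₀).val = 0 := by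
      rw [List.foldl_append]; erw [affT_zeros b a c hb w2 h2 (w1.foldl (affT b a c hb).δ (affT b a c hb).q₀)]
      apply Nat.div_eq_of_lt
      have hlt : ((w1.foldl (affT b a c hb).δ (affT b a c hb).q₀)).val < a + c + 1 :=
        Fin.isLt _
      omega
    rw [hof, hfold, Nat.mul_zero, Nat.add_zero] at spec
    have hq0 : ((affT b a c hb).q₀).val = c := rfl
    rw [hq0] at spec
    exact spec
  have hbk : a + c + 1 ≤ b ^ k := by
    calc a + c + 1 ≤ 2 ^ (a + c + 1) := (Nat.lt_two_pow_self (n := a + c + 1)).le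
    _ ≤ 2 ^ k := Nat.pow_le_pow_right (by omega) hk
    _ ≤ b ^ k := Nat.pow_le_pow_left hb k
  refine main _ _ ?_ ?_ (by simpa using hbk)
  · rw [List.map_map]
    calc List.map (Fin.val ∘ fun d => (⟨d % b, Nat.mod_lt d (by omega)⟩ : Fin b))
          (Nat.digits b x)
        = List.map id (Nat.digits b x) := by
          apply List.map_congr_left
          intro d hd
          simp [Nat.mod_eq_of_lt (Nat.digits_lt_base hb hd)]
    _ = Nat.digits b x := List.map_id _
  · intro d hd
    rw [List.eq_of_mem_replicate hd]
end
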